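/- (Regression Kink Design.) For every m ∈ ℝ, 𝒫₁(m) is indistinguishable from 𝒫₀(m) in the weak distance: for every Q ∈ 𝒫 with μ(Q) ≠ m there exists a sequence {P_k} in 𝒫 with μ(P_k) = m and P_k →d Q. Consequently: (i) any test of H₀ : μ(P) = m that is a.s. continuous under every Q ∈ 𝒫₁(m) has power limited by size, and (ii) any confidence set for the kink μ obtained by inverting such nonrandomized tests that has confidence level 1−α > 0 is unbounded with strictly positive probability under every P ∈ 𝒫. -/

import Mathlib

open MeasureTheory Filter Set

/-- Membership in the class `𝒢`: `g` is bounded, continuous at every `x ≠ c`, with finite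
one-sided limits `gp = g(c+)` and `gm = g(c−)` at the cutoff `c`. -/
def JumpFun (c : ℝ) (g : ℝ → ℝ) (gp gm : ℝ) : Prop :=
  (∃ C, ∀ x, |g x| ≤ C) ∧ (∀ x : ℝ, x ≠ c → ContinuousAt g x) ∧
  Tendsto g (nhdsWithin c (Ioi c)) (nhds gp) ∧
  Tendsto g (nhdsWithin c (Iio c)) (nhds gm)

/-- The forcing variable `X = z.2` is continuously distributed with a continuous density `f`
and the cutoff `c` lies in the interior of the support of the density. -/
def XCont (c : ℝ) (P : ProbabilityMeasure (ℝ × ℝ)) (f : ℝ → ℝ) : Prop :=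
  Continuous f ∧ (∀ x, 0 ≤ f x) ∧
  (P : Measure (ℝ × ℝ)).map Prod.snd
    = MeasureTheory.volume.withDensity (fun x => ENNReal.ofReal (f x)) ∧
  c ∈ interior {x | 0 < f x}

/-- `E_P[Y | X] = g(X)` `P`-almost surely, expressed via the defining property of
conditional expectations, together with integrability of `Y = z.1`. -/
def CondMeanEq (P : ProbabilityMeasure (ℝ × ℝ)) (g : ℝ → ℝ) : Prop :=
  Integrable (fun z : ℝ × ℝ => z.1) (P : Measure (ℝ × ℝ)) ∧
  ∀ B : Set ℝ, MeasurableSet B →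
    ∫ z in {z : ℝ × ℝ | z.2 ∈ B}, z.1 ∂(P : Measure (ℝ × ℝ))
      = ∫ z in {z : ℝ × ℝ | z.2 ∈ B}, g z.2 ∂(P : Measure (ℝ × ℝ))

/-- The family `𝒫` of sharp RDD models: `(Y,X) ∼ P` with `X` continuously distributed,
`c` interior to its support, and conditional mean in the class `𝒢`. -/
def MemRDD (c : ℝ) (P : ProbabilityMeasure (ℝ × ℝ)) : Prop :=
  (∃ f, XCont c P f) ∧ ∃ g gp gm, JumpFun c g gp gm ∧ CondMeanEq P g

/-- Convergence in distribution: integrals of every bounded continuous function converge. -/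
def ConvDM {E : Type*} [MeasurableSpace E] [TopologicalSpace E]
    (P : ℕ → Measure E) (Q : Measure E) : Prop :=
  ∀ g : E → ℝ, Continuous g → (∃ C, ∀ x, |g x| ≤ C) →
    Tendsto (fun k => ∫ x, g x ∂ P k) atTop (nhds (∫ x, g x ∂ Q))

/-- The distribution of an i.i.d. sample of size `n` from `P`: the `n`-fold product measure. -/
noncomputable def sampleDist (n : ℕ) {E : Type*} [MeasurableSpace E]
    (P : ProbabilityMeasure E) : Measure (Fin n → E) :=
  Measure.pi fun _ => (P : Measure E)

/-- `E_P[φ]`, the rejection probability of the test `φ` under `P^{⊗n}`. -/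
noncomputable def tpower (n : ℕ) {E : Type*} [MeasurableSpace E]
    (P : ProbabilityMeasure E) (φ : (Fin n → E) → ℝ) : ℝ :=
  ∫ z, φ z ∂ sampleDist n P

/-- A test is a measurable function with values in `[0,1]`. -/
def IsTest {E : Type*} [MeasurableSpace E] (φ : E → ℝ) : Prop :=
  Measurable φ ∧ ∀ z, φ z ∈ Set.Icc (0:ℝ) 1

/-- `φ` is almost-surely continuous under `Q` (i.e. under `Q^{⊗n}`). -/
def ASCont {E : Type*} [MeasurableSpace E] [TopologicalSpace E] (n : ℕ)
    (Q : ProbabilityMeasure E) (φ : (Fin n → E) → ℝ) : Prop :=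
  sampleDist n Q {z | ¬ ContinuousAt φ z} = 0

/-- The family `𝒫` of Regression Kink Design models: `(Y,X) ∼ P` with `X` continuously
distributed, `c` interior to its support, and a conditional mean function whose derivative
away from `c` (on the support) lies in the class `𝒢`. -/
def MemRKD (c : ℝ) (P : ProbabilityMeasure (ℝ × ℝ)) : Prop :=
  ∃ f : ℝ → ℝ, XCont c P f ∧
    ∃ h : ℝ → ℝ, CondMeanEq P h ∧
      ∃ g gp gm, JumpFun c g gp gm ∧
        ∀ x ∈ interior {x | 0 < f x}, x ≠ c → HasDerivAt h (g x) x

/-!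
Shift `Y` by `ψₖ(X)`, where `ψₖ(x) = (δ/(k+1))(1 − e^{−(k+1)(x−c)⁺})`. This leaves the law of `X`
unchanged, adds `ψₖ` to the conditional mean and `δ` to the jump of its derivative at `c`; with
`δ = m − μ(Q)` every perturbed model has kink `m`. Since `ψₖ → 0` pointwise, the perturbed samples
converge to those from `Q` coordinatewise, so by dominated convergence the rejection probability
of a test that is continuous `Q`-a.s. is a limit of rejection probabilities under the null. For a
confidence set this makes the acceptance probability of every `m ≠ μ(P)` under `P` at least
`1 − α`, and letting `m → ∞` the set is unbounded with probability at least `1 − α`.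
-/

open Topology

noncomputable section

def kinkRamp (δ a c x : ℝ) : ℝ := δ / a * (1 - Real.exp (-(a * max (x - c) 0)))

def kinkRampDeriv (δ a c x : ℝ) : ℝ := if c < x then δ * Real.exp (-(a * (x - c))) else 0

lemma continuous_kinkRamp (δ a c : ℝ) : Continuous (kinkRamp δ a c) := by
  unfold kinkRamp; fun_prop

lemma abs_kinkRamp_le {a : ℝ} (ha : 0 < a) (δ c x : ℝ) : |kinkRamp δ a c x| ≤ |δ| / a := by
  have hexp_le : Real.exp (-(a * max (x - c) 0)) ≤ 1 :=
    Real.exp_le_one_iff.2 (neg_nonpos.2 (mul_nonneg ha.le (le_max_right _ _)))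
  have hexp_pos := Real.exp_pos (-(a * max (x - c) 0))
  rw [kinkRamp, abs_mul, abs_div, abs_of_pos ha, abs_of_nonneg (sub_nonneg.2 hexp_le)]
  exact mul_le_of_le_one_right (by positivity) (by linarith)

lemma tendsto_kinkRamp_atTop (δ c x : ℝ) :
    Tendsto (fun k : ℕ => kinkRamp δ (k + 1) c x) atTop (𝓝 0) := by
  have hbound : Tendsto (fun k : ℕ => |δ| / ((k : ℝ) + 1)) atTop (𝓝 0) :=
    tendsto_const_nhds.div_atTop (tendsto_atTop_add_const_right _ 1 tendsto_natCast_atTop_atTop)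
  refine squeeze_zero_norm (fun k => ?_) hbound
  exact abs_kinkRamp_le (by positivity) δ c x

lemma hasDerivAt_kinkRamp {a : ℝ} (ha : a ≠ 0) (δ : ℝ) {c x : ℝ} (hx : x ≠ c) :
    HasDerivAt (kinkRamp δ a c) (kinkRampDeriv δ a c x) x := by
  rcases hx.lt_or_gt with hlt | hgt
  · have hzero : kinkRamp δ a c =ᶠ[𝓝 x] fun _ => 0 := by
      filter_upwards [Iio_mem_nhds hlt] with y hy
      simp [kinkRamp, max_eq_right (sub_nonpos.2 (le_of_lt (mem_Iio.1 hy)))]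
    rw [kinkRampDeriv, if_neg hlt.not_gt]
    exact (hasDerivAt_const x 0).congr_of_eventuallyEq hzero
  · have hexp : kinkRamp δ a c =ᶠ[𝓝 x] fun y => δ / a * (1 - Real.exp (-(a * (y - c)))) := by
      filter_upwards [Ioi_mem_nhds hgt] with y hy
      rw [kinkRamp, max_eq_left (sub_nonneg.2 (le_of_lt (mem_Ioi.1 hy)))]
    rw [kinkRampDeriv, if_pos hgt]
    have hderiv := ((((hasDerivAt_id' x).sub_const c).const_mul a).neg.exp.const_sub 1).const_mul
      (δ / a)
    refine (hderiv.congr_deriv ?_).congr_of_eventuallyEq hexp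
    field_simp
    rfl

lemma continuousAt_kinkRampDeriv (δ a : ℝ) {c x : ℝ} (hx : x ≠ c) :
    ContinuousAt (kinkRampDeriv δ a c) x := by
  rcases hx.lt_or_gt with hlt | hgt
  · refine continuousAt_const.congr (f := fun _ => (0 : ℝ)) ?_
    filter_upwards [Iio_mem_nhds hlt] with y hy
    rw [kinkRampDeriv, if_neg (not_lt.2 (le_of_lt (mem_Iio.1 hy)))]
  · have hcont : Continuous fun y => δ * Real.exp (-(a * (y - c))) := by fun_prop
    refine hcont.continuousAt.congr ?_
    filter_upwards [Ioi_mem_nhds hgt] with y hy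
    rw [kinkRampDeriv, if_pos (mem_Ioi.1 hy)]

lemma jumpFun_kinkRampDeriv {a : ℝ} (ha : 0 ≤ a) (δ c : ℝ) :
    JumpFun c (kinkRampDeriv δ a c) δ 0 := by
  refine ⟨⟨|δ|, fun x => ?_⟩, fun x hx => continuousAt_kinkRampDeriv δ a hx, ?_, ?_⟩
  · unfold kinkRampDeriv
    split_ifs with hx
    · rw [abs_mul, Real.abs_exp]
      exact mul_le_of_le_one_right (abs_nonneg δ)
        (Real.exp_le_one_iff.2 (neg_nonpos.2 (mul_nonneg ha (sub_nonneg.2 hx.le))))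
    · simp
  · have hcont : Tendsto (fun y => δ * Real.exp (-(a * (y - c)))) (𝓝[>] c) (𝓝 δ) := by
      have hcont' : Continuous fun y => δ * Real.exp (-(a * (y - c))) := by fun_prop
      simpa using (hcont'.tendsto c).mono_left nhdsWithin_le_nhds
    refine hcont.congr' ?_
    filter_upwards [self_mem_nhdsWithin] with y hy
    rw [kinkRampDeriv, if_pos (mem_Ioi.1 hy)]
  · refine tendsto_const_nhds.congr' ?_
    filter_upwards [self_mem_nhdsWithin] with y hy
    rw [kinkRampDeriv, if_neg (not_lt.2 (le_of_lt (mem_Iio.1 hy)))]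

lemma JumpFun.add {c gp gm gp' gm' : ℝ} {g g' : ℝ → ℝ} (h : JumpFun c g gp gm)
    (h' : JumpFun c g' gp' gm') : JumpFun c (g + g') (gp + gp') (gm + gm') := by
  obtain ⟨⟨C, hC⟩, hcont, hright, hleft⟩ := h
  obtain ⟨⟨C', hC'⟩, hcont', hright', hleft'⟩ := h'
  exact ⟨⟨C + C', fun x => (abs_add_le _ _).trans (add_le_add (hC x) (hC' x))⟩,
    fun x hx => (hcont x hx).add (hcont' x hx), hright.add hright', hleft.add hleft'⟩

section SetIntegralPreimage

variable {α : Type*} [MeasurableSpace α] {ρ : Measure α} [IsFiniteMeasure ρ] {Y u : α → ℝ}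

/-- On `{0 ≤ u ≤ M}` the function `u` is bounded, so there the hypothesis compares genuine
integrals; monotone convergence in `M` does the rest. -/
lemma lintegral_ofReal_le_of_setIntegral_preimage_eq (hY : Integrable Y ρ) (hu : Measurable u)
    (h : ∀ t : Set ℝ, MeasurableSet t → ∫ z in u ⁻¹' t, Y z ∂ρ = ∫ z in u ⁻¹' t, u z ∂ρ) :
    ∫⁻ z, ENNReal.ofReal (u z) ∂ρ ≤ ENNReal.ofReal (∫ z, |Y z| ∂ρ) := by
  set s : ℕ → Set α := fun M => u ⁻¹' Icc 0 M
  have hsupp : (fun z => ENNReal.ofReal (u z)).support ⊆ ⋃ M, s M := by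
    intro z hz
    obtain ⟨M, hM⟩ := exists_nat_ge (u z)
    exact mem_iUnion.2 ⟨M, (ENNReal.ofReal_pos.1 (pos_iff_ne_zero.2 hz)).le, hM⟩
  have hmono : Monotone s := fun M N hMN =>
    preimage_mono (Icc_subset_Icc_right (Nat.cast_le.2 hMN))
  rw [← setLIntegral_eq_of_support_subset hsupp,
    setLIntegral_iUnion_of_directed _ hmono.directed_le]
  refine iSup_le fun M => ?_
  have hs : MeasurableSet (s M) := hu measurableSet_Icc
  have hint : IntegrableOn u (s M) ρ :=
    Measure.integrableOn_of_bounded (M := M) (measure_ne_top ρ _) hu.aestronglyMeasurable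
      ((ae_restrict_iff' hs).2 (ae_of_all _ fun z hz => by
        rw [Real.norm_eq_abs, abs_of_nonneg hz.1]; exact hz.2))
  have hnonneg : 0 ≤ᵐ[ρ.restrict (s M)] u := (ae_restrict_iff' hs).2 (ae_of_all _ fun z hz => hz.1)
  rw [← ofReal_integral_eq_lintegral_ofReal hint hnonneg, ← h _ measurableSet_Icc]
  gcongr
  calc ∫ z in s M, Y z ∂ρ ≤ ∫ z in s M, |Y z| ∂ρ :=
        integral_mono hY.integrableOn hY.abs.integrableOn fun z => le_abs_self _
    _ ≤ ∫ z, |Y z| ∂ρ := setIntegral_le_integral hY.abs (ae_of_all _ fun z => abs_nonneg _)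

lemma integrable_of_setIntegral_preimage_eq (hY : Integrable Y ρ) (hu : Measurable u)
    (h : ∀ t : Set ℝ, MeasurableSet t → ∫ z in u ⁻¹' t, Y z ∂ρ = ∫ z in u ⁻¹' t, u z ∂ρ) :
    Integrable u ρ := by
  have hneg_eq : ∀ t : Set ℝ, MeasurableSet t →
      ∫ z in (-u) ⁻¹' t, -Y z ∂ρ = ∫ z in (-u) ⁻¹' t, -u z ∂ρ := fun t ht => by
    rw [integral_neg, integral_neg]
    exact congrArg Neg.neg (h (-t) ht.neg)
  have hpos := lintegral_ofReal_le_of_setIntegral_preimage_eq hY hu h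
  have hneg := lintegral_ofReal_le_of_setIntegral_preimage_eq hY.neg hu.neg hneg_eq
  have hsplit : ∀ z, ‖u z‖ₑ = ENNReal.ofReal (u z) + ENNReal.ofReal (-u z) := fun z => by
    rw [Real.enorm_eq_ofReal_abs]
    rcases le_total 0 (u z) with hz | hz
    · rw [abs_of_nonneg hz, ENNReal.ofReal_of_nonpos (neg_nonpos.2 hz), add_zero]
    · rw [abs_of_nonpos hz, ENNReal.ofReal_of_nonpos hz, zero_add]
  refine ⟨hu.aestronglyMeasurable, ?_⟩
  rw [HasFiniteIntegral, lintegral_congr hsplit, lintegral_add_left hu.ennreal_ofReal]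
  simp only [Pi.neg_apply, abs_neg] at hneg
  exact ENNReal.add_lt_top.2
    ⟨hpos.trans_lt ENNReal.ofReal_lt_top, hneg.trans_lt ENNReal.ofReal_lt_top⟩

end SetIntegralPreimage

def IsRKDModel (c : ℝ) (P : ProbabilityMeasure (ℝ × ℝ)) (f h g : ℝ → ℝ) (gp gm : ℝ) : Prop :=
  XCont c P f ∧ CondMeanEq P h ∧ JumpFun c g gp gm ∧
    ∀ x ∈ interior {x | 0 < f x}, x ≠ c → HasDerivAt h (g x) x

section Model

variable {c : ℝ} {P : ProbabilityMeasure (ℝ × ℝ)}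

lemma memRKD_iff : MemRKD c P ↔ ∃ f h g gp gm, IsRKDModel c P f h g gp gm := by
  constructor
  · rintro ⟨f, hX, h, hCM, g, gp, gm, hJ, hD⟩
    exact ⟨f, h, g, gp, gm, hX, hCM, hJ, hD⟩
  · rintro ⟨f, h, g, gp, gm, hX, hCM, hJ, hD⟩
    exact ⟨f, hX, h, hCM, g, gp, gm, hJ, hD⟩

lemma XCont.ae_snd_mem {f : ℝ → ℝ} (hX : XCont c P f) :
    ∀ᵐ z ∂(P : Measure (ℝ × ℝ)), z.2 ∈ {x | 0 < f x} \ {c} := by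
  have hlaw : ∀ᵐ x ∂(P : Measure (ℝ × ℝ)).map Prod.snd, x ∈ {x | 0 < f x} \ {c} := by
    rw [hX.2.2.1, ae_withDensity_iff hX.1.measurable.ennreal_ofReal]
    filter_upwards [Measure.ae_ne volume c] with x hxc hfx
    exact ⟨ENNReal.ofReal_pos.1 (pos_iff_ne_zero.2 hfx), hxc⟩
  exact ae_of_ae_map measurable_snd.aemeasurable hlaw

/-- `h` is only pinned down on the support of `X`, and off it need not be measurable, in which
case the integrals in `CondMeanEq` are junk; its restriction to the support is measurable. -/
lemma IsRKDModel.indicator {f h g : ℝ → ℝ} {gp gm : ℝ} (hP : IsRKDModel c P f h g gp gm) :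
    Measurable (({x | 0 < f x} \ {c}).indicator h) ∧
      IsRKDModel c P f (({x | 0 < f x} \ {c}).indicator h) g gp gm := by
  obtain ⟨hX, hCM, hJ, hD⟩ := hP
  set V := {x | 0 < f x} \ {c}
  have hU : IsOpen {x | 0 < f x} := isOpen_lt continuous_const hX.1
  have hV : IsOpen V := hU.sdiff isClosed_singleton
  have hDV : ∀ x ∈ V, HasDerivAt h (g x) x := fun x hx =>
    hD x (hU.interior_eq.symm ▸ hx.1) hx.2
  refine ⟨?_, hX, ⟨hCM.1, fun B hB => ?_⟩, hJ, fun x hx hxc => ?_⟩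
  · classical
    rw [← piecewise_eq_indicator]
    exact ContinuousOn.measurable_piecewise
      (fun x hx => (hDV x hx).continuousAt.continuousWithinAt) continuousOn_const hV.measurableSet
  · rw [hCM.2 B hB]
    refine integral_congr_ae (ae_restrict_of_ae ?_)
    filter_upwards [hX.ae_snd_mem] with z hz
    exact (indicator_of_mem hz h).symm
  · have hxV : x ∈ V := ⟨hU.interior_eq ▸ hx, hxc⟩
    refine (hDV x hxV).congr_of_eventuallyEq ?_
    filter_upwards [hV.mem_nhds hxV] with y hy
    exact indicator_of_mem hy h

lemma CondMeanEq.integrable_comp_snd {h : ℝ → ℝ} (hCM : CondMeanEq P h) (hh : Measurable h) :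
    Integrable (fun z : ℝ × ℝ => h z.2) P :=
  integrable_of_setIntegral_preimage_eq hCM.1 (hh.comp measurable_snd) fun _ ht => hCM.2 _ (hh ht)

def shiftFst (ψ : ℝ → ℝ) (z : ℝ × ℝ) : ℝ × ℝ := (z.1 + ψ z.2, z.2)

lemma continuous_shiftFst {ψ : ℝ → ℝ} (hψ : Continuous ψ) : Continuous (shiftFst ψ) :=
  (continuous_fst.add (hψ.comp continuous_snd)).prodMk continuous_snd

lemma CondMeanEq.map_shiftFst {h ψ : ℝ → ℝ} (hCM : CondMeanEq P h) (hh : Measurable h)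
    (hψ : Continuous ψ) (hψb : ∃ C, ∀ x, |ψ x| ≤ C) :
    CondMeanEq (P.map (continuous_shiftFst hψ).aemeasurable) (h + ψ) := by
  have hT := (continuous_shiftFst hψ).measurable
  obtain ⟨C, hC⟩ := hψb
  have hψi : Integrable (fun z : ℝ × ℝ => ψ z.2) P :=
    Integrable.of_bound (hψ.comp continuous_snd).aestronglyMeasurable C
      (ae_of_all _ fun z => hC z.2)
  have hhi := hCM.integrable_comp_snd hh
  rw [CondMeanEq, ProbabilityMeasure.toMeasure_map]
  refine ⟨(integrable_map_measure measurable_fst.aestronglyMeasurable hT.aemeasurable).2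
    (hCM.1.add hψi), fun B hB => ?_⟩
  have hS : MeasurableSet {z : ℝ × ℝ | z.2 ∈ B} := measurable_snd hB
  rw [setIntegral_map hS measurable_fst.aestronglyMeasurable hT.aemeasurable,
    setIntegral_map (f := fun z : ℝ × ℝ => (h + ψ) z.2) hS
      ((hh.add hψ.measurable).comp measurable_snd).aestronglyMeasurable hT.aemeasurable]
  change ∫ z in {z : ℝ × ℝ | z.2 ∈ B}, z.1 + ψ z.2 ∂P
    = ∫ z in {z : ℝ × ℝ | z.2 ∈ B}, h z.2 + ψ z.2 ∂P
  rw [integral_add hCM.1.integrableOn hψi.integrableOn,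
    integral_add hhi.integrableOn hψi.integrableOn, hCM.2 B hB]

lemma IsRKDModel.map_shiftFst {f h g ψ ψ' : ℝ → ℝ} {gp gm dp dm : ℝ}
    (hP : IsRKDModel c P f h g gp gm) (hh : Measurable h) (hψ : Continuous ψ)
    (hψb : ∃ C, ∀ x, |ψ x| ≤ C) (hψ' : ∀ x, x ≠ c → HasDerivAt ψ (ψ' x) x)
    (hJ : JumpFun c ψ' dp dm) :
    IsRKDModel c (P.map (continuous_shiftFst hψ).aemeasurable) f (h + ψ) (g + ψ')
      (gp + dp) (gm + dm) := by
  obtain ⟨hX, hCM, hJg, hD⟩ := hP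
  refine ⟨⟨hX.1, hX.2.1, ?_, hX.2.2.2⟩, hCM.map_shiftFst hh hψ hψb, hJg.add hJ,
    fun x hx hxc => (hD x hx hxc).add (hψ' x hxc)⟩
  rw [ProbabilityMeasure.toMeasure_map,
    Measure.map_map measurable_snd (continuous_shiftFst hψ).measurable]
  exact hX.2.2.1

end Model

def kinkPerturbation (Q : ProbabilityMeasure (ℝ × ℝ)) (δ c : ℝ) (k : ℕ) :
    ProbabilityMeasure (ℝ × ℝ) :=
  Q.map (continuous_shiftFst (continuous_kinkRamp δ (k + 1) c)).aemeasurable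

def IsKinkFunctional (c : ℝ) (μ : ProbabilityMeasure (ℝ × ℝ) → ℝ) : Prop :=
  ∀ P f h g gp gm, IsRKDModel c P f h g gp gm → μ P = gp - gm

lemma memRKD_kinkPerturbation {c : ℝ} {μ : ProbabilityMeasure (ℝ × ℝ) → ℝ}
    (hμ : IsKinkFunctional c μ) {Q : ProbabilityMeasure (ℝ × ℝ)} (hQ : MemRKD c Q) (m : ℝ) (k : ℕ) :
    MemRKD c (kinkPerturbation Q (m - μ Q) c k) ∧ μ (kinkPerturbation Q (m - μ Q) c k) = m := by
  obtain ⟨f, h, g, gp, gm, hP⟩ := memRKD_iff.1 hQ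
  obtain ⟨hh, hP₀⟩ := hP.indicator
  have hk : (0 : ℝ) < k + 1 := by positivity
  have hP' := hP₀.map_shiftFst hh (continuous_kinkRamp (m - μ Q) (k + 1) c)
    ⟨_, abs_kinkRamp_le hk (m - μ Q) c⟩ (fun x hx => hasDerivAt_kinkRamp hk.ne' _ hx)
    (jumpFun_kinkRampDeriv hk.le (m - μ Q) c)
  refine ⟨memRKD_iff.2 ⟨_, _, _, _, _, hP'⟩, ?_⟩
  rw [kinkPerturbation, hμ _ _ _ _ _ _ hP', hμ _ _ _ _ _ _ hP]
  ring

lemma tendsto_integral_map_of_tendsto_id {α : Type*} [MeasurableSpace α] [TopologicalSpace α]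
    {ρ : Measure α} [IsFiniteMeasure ρ] {T : ℕ → α → α} (hT : ∀ k, Measurable (T k))
    (hTid : ∀ z, Tendsto (fun k => T k z) atTop (𝓝 z)) {φ : α → ℝ} (hφ : Measurable φ)
    {C : ℝ} (hφC : ∀ z, |φ z| ≤ C) (hφc : ∀ᵐ z ∂ρ, ContinuousAt φ z) :
    Tendsto (fun k => ∫ z, φ z ∂ρ.map (T k)) atTop (𝓝 (∫ z, φ z ∂ρ)) := by
  refine Tendsto.congr
    (fun k => (integral_map (hT k).aemeasurable hφ.aestronglyMeasurable).symm) ?_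
  refine tendsto_integral_of_dominated_convergence (fun _ => C)
    (fun k => (hφ.comp (hT k)).aestronglyMeasurable) (integrable_const C)
    (fun k => ae_of_all _ fun z => (Real.norm_eq_abs _).trans_le (hφC _)) ?_
  filter_upwards [hφc] with z hz
  exact hz.tendsto.comp (hTid z)

lemma tendsto_shiftFst_kinkRamp (δ c : ℝ) (z : ℝ × ℝ) :
    Tendsto (fun k : ℕ => shiftFst (kinkRamp δ (k + 1) c) z) atTop (𝓝 z) := by
  simpa [shiftFst] using ((tendsto_const_nhds (x := z.1)).add
    (tendsto_kinkRamp_atTop δ c z.2)).prodMk_nhds (tendsto_const_nhds (x := z.2))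

lemma convDM_kinkPerturbation (Q : ProbabilityMeasure (ℝ × ℝ)) (δ c : ℝ) :
    ConvDM (fun k => (kinkPerturbation Q δ c k : Measure (ℝ × ℝ))) Q := by
  rintro g hg ⟨C, hC⟩
  simp only [kinkPerturbation, ProbabilityMeasure.toMeasure_map]
  exact tendsto_integral_map_of_tendsto_id
    (fun k => (continuous_shiftFst (continuous_kinkRamp δ (k + 1) c)).measurable)
    (tendsto_shiftFst_kinkRamp δ c) hg.measurable hC (ae_of_all _ fun _ => hg.continuousAt)

section Sample

variable {E : Type*} [MeasurableSpace E]

instance (n : ℕ) (P : ProbabilityMeasure E) : IsProbabilityMeasure (sampleDist n P) := by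
  unfold sampleDist; infer_instance

lemma sampleDist_map (n : ℕ) (P : ProbabilityMeasure E) {T : E → E} (hT : AEMeasurable T P) :
    sampleDist n (P.map hT) = (sampleDist n P).map (fun z i => T (z i)) := by
  simp only [sampleDist, ProbabilityMeasure.toMeasure_map]
  exact (Measure.pi_map_pi fun _ => hT).symm

lemma IsTest.abs_le_one {φ : E → ℝ} (hφ : IsTest φ) (z : E) : |φ z| ≤ 1 :=
  abs_le.2 ⟨by linarith [(hφ.2 z).1], (hφ.2 z).2⟩

lemma tpower_nonneg (n : ℕ) (P : ProbabilityMeasure E) {φ : (Fin n → E) → ℝ} (hφ : IsTest φ) :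
    0 ≤ tpower n P φ :=
  integral_nonneg fun z => (hφ.2 z).1

lemma tpower_le_one (n : ℕ) (P : ProbabilityMeasure E) {φ : (Fin n → E) → ℝ} (hφ : IsTest φ) :
    tpower n P φ ≤ 1 := by
  have hnorm := norm_integral_le_of_norm_le_const (μ := sampleDist n P)
    (ae_of_all _ fun z => (Real.norm_eq_abs _).trans_le (hφ.abs_le_one z))
  simpa [tpower] using (le_abs_self _).trans hnorm

lemma integral_one_sub_eq_measureReal {ν : Measure E} [IsProbabilityMeasure ν] {φ : E → ℝ}
    (hφ : Measurable φ) (h01 : ∀ z, φ z = 0 ∨ φ z = 1) :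
    ∫ z, 1 - φ z ∂ν = ν.real {z | φ z = 0} := by
  have hind : (fun z => 1 - φ z) = {z | φ z = 0}.indicator 1 := by
    funext z
    rcases h01 z with h | h <;> simp [h]
  rw [hind, integral_indicator_one (s := {z | φ z = 0}) (hφ (measurableSet_singleton 0))]

end Sample

lemma tendsto_tpower_kinkPerturbation (n : ℕ) (Q : ProbabilityMeasure (ℝ × ℝ)) (δ c : ℝ)
    {φ : (Fin n → ℝ × ℝ) → ℝ} (hφ : Measurable φ) {C : ℝ} (hφC : ∀ z, |φ z| ≤ C)
    (hac : ASCont n Q φ) :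
    Tendsto (fun k => tpower n (kinkPerturbation Q δ c k) φ) atTop (𝓝 (tpower n Q φ)) := by
  simp only [tpower, kinkPerturbation, sampleDist_map]
  exact tendsto_integral_map_of_tendsto_id
    (fun k => measurable_pi_lambda _ fun i =>
      (continuous_shiftFst (continuous_kinkRamp δ (k + 1) c)).measurable.comp
        (measurable_pi_apply i))
    (fun z => tendsto_pi_nhds.2 fun i => tendsto_shiftFst_kinkRamp δ c (z i)) hφ hφC
    (ae_iff.2 hac)

lemma le_measure_limsup_atTop {α : Type*} [MeasurableSpace α] {ρ : Measure α} [IsFiniteMeasure ρ]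
    {A : ℕ → Set α} (hA : ∀ j, MeasurableSet (A j)) {ε : ENNReal} (hε : ∀ j, ε ≤ ρ (A j)) :
    ε ≤ ρ (limsup A atTop) := by
  have hanti : Antitone fun N => ⋃ j ≥ N, A j := fun N M hNM =>
    biUnion_mono (fun j hj => le_trans hNM hj) fun _ _ => subset_rfl
  rw [limsup_eq_iInf_iSup_of_nat]
  simp only [iInf_eq_iInter, iSup_eq_iUnion]
  rw [hanti.measure_iInter
    (fun N => (MeasurableSet.biUnion (to_countable _) fun j _ => hA j).nullMeasurableSet)
    ⟨0, measure_ne_top _ _⟩]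
  exact le_iInf fun N => (hε N).trans (measure_mono (subset_biUnion_of_mem (le_refl N)))

lemma not_isBounded_of_frequently_mem {S : Set ℝ} {x : ℕ → ℝ} (hx : Tendsto x atTop atTop)
    (hS : ∃ᶠ j in atTop, x j ∈ S) : ¬ Bornology.IsBounded S := by
  intro hbdd
  obtain ⟨C, hC⟩ := hbdd.bddAbove
  obtain ⟨j, hjS, hjC⟩ := (hS.and_eventually (hx.eventually_gt_atTop C)).exists
  exact (hC hjS).not_gt hjC

variable {n : ℕ} {c : ℝ} {μ : ProbabilityMeasure (ℝ × ℝ) → ℝ}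

lemma tpower_le_sSup_null (hμ : IsKinkFunctional c μ) {Q : ProbabilityMeasure (ℝ × ℝ)}
    (hQ : MemRKD c Q) {φ : (Fin n → ℝ × ℝ) → ℝ} (hφ : IsTest φ) (hac : ASCont n Q φ) (m : ℝ) :
    tpower n Q φ ≤ sSup ((fun P => tpower n P φ) '' {P | MemRKD c P ∧ μ P = m}) := by
  have hbdd : BddAbove ((fun P => tpower n P φ) '' {P | MemRKD c P ∧ μ P = m}) := by
    refine ⟨1, ?_⟩
    rintro _ ⟨P, -, rfl⟩
    exact tpower_le_one n P hφ
  exact le_of_tendsto (tendsto_tpower_kinkPerturbation n Q (m - μ Q) c hφ.1 hφ.abs_le_one hac)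
    (Eventually.of_forall fun k => le_csSup hbdd ⟨_, memRKD_kinkPerturbation hμ hQ m k, rfl⟩)

lemma le_acceptance_of_coverage (hμ : IsKinkFunctional c μ) {φ : ℝ → (Fin n → ℝ × ℝ) → ℝ}
    {ε : ℝ} (hcov : ∀ R, MemRKD c R → ε ≤ (sampleDist n R {z | φ (μ R) z = 0}).toReal)
    {P : ProbabilityMeasure (ℝ × ℝ)} (hP : MemRKD c P) {m : ℝ} (hφ : Measurable (φ m))
    (h01 : ∀ z, φ m z = 0 ∨ φ m z = 1) (hac : ASCont n P (φ m)) :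
    ε ≤ (sampleDist n P {z | φ m z = 0}).toReal := by
  have hacc : ∀ R, tpower n R (fun z => 1 - φ m z) = (sampleDist n R {z | φ m z = 0}).toReal :=
    fun R => integral_one_sub_eq_measureReal hφ h01
  have hac' : ASCont n P (fun z => 1 - φ m z) :=
    measure_mono_null (fun z hz hcont => hz (continuousAt_const.sub hcont)) hac
  have hbound : ∀ z, |1 - φ m z| ≤ 1 := fun z => by rcases h01 z with h | h <;> simp [h]
  have hlim := tendsto_tpower_kinkPerturbation n P (m - μ P) c (φ := fun z => 1 - φ m z)
    (measurable_const.sub hφ) hbound hac'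
  rw [← hacc]
  refine ge_of_tendsto hlim (Eventually.of_forall fun k => ?_)
  obtain ⟨hmem, hkink⟩ := memRKD_kinkPerturbation hμ hP m k
  rw [hacc]
  simpa only [hkink] using hcov _ hmem

lemma measure_not_isBounded_acceptance_pos (hμ : IsKinkFunctional c μ)
    {φ : ℝ → (Fin n → ℝ × ℝ) → ℝ} (hφ : ∀ m, Measurable (φ m) ∧ ∀ z, φ m z = 0 ∨ φ m z = 1)
    {P : ProbabilityMeasure (ℝ × ℝ)} (hac : ∀ m, μ P ≠ m → ASCont n P (φ m)) {ε : ℝ} (hε : 0 < ε)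
    (hcov : ∀ R, MemRKD c R → ε ≤ (sampleDist n R {z | φ (μ R) z = 0}).toReal)
    (hP : MemRKD c P) :
    0 < sampleDist n P {z | ¬ Bornology.IsBounded {m : ℝ | φ m z = 0}} := by
  set m : ℕ → ℝ := fun j => μ P + j + 1
  have hm : Tendsto m atTop atTop := tendsto_atTop_add_const_right _ 1
    (tendsto_atTop_add_const_left _ _ tendsto_natCast_atTop_atTop)
  have hA : ∀ j, ENNReal.ofReal ε ≤ sampleDist n P {z | φ (m j) z = 0} := fun j =>
    (ENNReal.ofReal_le_iff_le_toReal (measure_ne_top _ _)).2 <|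
      le_acceptance_of_coverage hμ hcov hP (hφ _).1 (hφ _).2 (hac _
        (show μ P < m j by simp only [m]; linarith [j.cast_nonneg (α := ℝ)]).ne)
  calc 0 < ENNReal.ofReal ε := ENNReal.ofReal_pos.2 hε
    _ ≤ sampleDist n P (limsup (fun j => {z | φ (m j) z = 0}) atTop) :=
      le_measure_limsup_atTop (fun j => (hφ _).1 (measurableSet_singleton 0)) hA
    _ ≤ _ := measure_mono fun z hz =>
      not_isBounded_of_frequently_mem hm (mem_limsup_iff_frequently_mem.1 hz)

end

theorem rkd_impossible_inference_general (n : ℕ) (c : ℝ)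
    (μ : ProbabilityMeasure (ℝ × ℝ) → ℝ)
    (hμ : ∀ (P : ProbabilityMeasure (ℝ × ℝ)) (f h g : ℝ → ℝ) (gp gm : ℝ),
      XCont c P f → CondMeanEq P h → JumpFun c g gp gm →
      (∀ x ∈ interior {x | 0 < f x}, x ≠ c → HasDerivAt h (g x) x) →
      μ P = gp - gm) :
    (∀ (m : ℝ) (Q : ProbabilityMeasure (ℝ × ℝ)), MemRKD c Q → μ Q ≠ m →
      ∃ P : ℕ → ProbabilityMeasure (ℝ × ℝ),
        (∀ k, MemRKD c (P k) ∧ μ (P k) = m) ∧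
        ConvDM (fun k => ((P k) : Measure (ℝ × ℝ))) (Q : Measure (ℝ × ℝ))) ∧
    (∀ (m : ℝ) (φ : (Fin n → ℝ × ℝ) → ℝ), IsTest φ →
      (∀ Q : ProbabilityMeasure (ℝ × ℝ), MemRKD c Q → μ Q ≠ m → ASCont n Q φ) →
      sSup ((fun Q => tpower n Q φ) '' {Q | MemRKD c Q ∧ μ Q ≠ m}) ≤
        sSup ((fun P => tpower n P φ) '' {P | MemRKD c P ∧ μ P = m})) ∧
    (∀ (φ : ℝ → (Fin n → ℝ × ℝ) → ℝ),
      (∀ m, Measurable (φ m) ∧ ∀ z, φ m z = 0 ∨ φ m z = 1) →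
      (∀ m : ℝ, ∀ Q : ProbabilityMeasure (ℝ × ℝ), MemRKD c Q → μ Q ≠ m →
        ASCont n Q (φ m)) →
      ∀ α : ℝ,
        sInf ((fun P => (sampleDist n P {z | φ (μ P) z = 0}).toReal)
          '' {P | MemRKD c P}) = 1 - α →
        0 < 1 - α →
        ∀ P : ProbabilityMeasure (ℝ × ℝ), MemRKD c P →
          0 < sampleDist n P {z | ¬ Bornology.IsBounded {m : ℝ | φ m z = 0}}) := by
  have hkink : IsKinkFunctional c μ := fun P f h g gp gm hP =>
    hμ P f h g gp gm hP.1 hP.2.1 hP.2.2.1 hP.2.2.2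
  refine ⟨fun m Q hQ _ => ⟨_, memRKD_kinkPerturbation hkink hQ m, convDM_kinkPerturbation Q _ c⟩,
    fun m φ hφ hac => ?_, fun φ hφ hac α hcov hα P hP => ?_⟩
  · refine Real.sSup_le ?_ (Real.sSup_nonneg ?_)
    · rintro _ ⟨Q, ⟨hQ, hQm⟩, rfl⟩
      exact tpower_le_sSup_null hkink hQ hφ (hac Q hQ hQm) m
    · rintro _ ⟨P, -, rfl⟩
      exact tpower_nonneg n P hφ
  · refine measure_not_isBounded_acceptance_pos hkink hφ (fun m => hac m P hP) hα
      (fun R hR => hcov ▸ csInf_le ?_ ⟨R, hR, rfl⟩) hP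
    exact ⟨0, by rintro _ ⟨_, -, rfl⟩; exact ENNReal.toReal_nonneg⟩

/-- Corollary 2, Regression Kink Design: for every `m`, the models with
kink `≠ m` are indistinguishable in the weak distance from those with kink `m`;
consequently (i) a.s. continuous tests on the kink value have power limited by size, and
(ii) confidence sets for the kink obtained by inverting such nonrandomized tests with
confidence level `1 − α > 0` are unbounded with strictly positive probability under every
`P ∈ 𝒫`. -/
theorem rkd_impossible_inference (n : ℕ) (hn : 1 ≤ n) (c : ℝ)
    (μ : ProbabilityMeasure (ℝ × ℝ) → ℝ)
    (hμ : ∀ (P : ProbabilityMeasure (ℝ × ℝ)) (f h g : ℝ → ℝ) (gp gm : ℝ),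
      XCont c P f → CondMeanEq P h → JumpFun c g gp gm →
      (∀ x ∈ interior {x | 0 < f x}, x ≠ c → HasDerivAt h (g x) x) →
      μ P = gp - gm) :
    (∀ (m : ℝ) (Q : ProbabilityMeasure (ℝ × ℝ)), MemRKD c Q → μ Q ≠ m →
      ∃ P : ℕ → ProbabilityMeasure (ℝ × ℝ),
        (∀ k, MemRKD c (P k) ∧ μ (P k) = m) ∧
        ConvDM (fun k => ((P k) : Measure (ℝ × ℝ))) (Q : Measure (ℝ × ℝ))) ∧
    (∀ (m : ℝ) (φ : (Fin n → ℝ × ℝ) → ℝ), IsTest φ →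
      (∀ Q : ProbabilityMeasure (ℝ × ℝ), MemRKD c Q → μ Q ≠ m → ASCont n Q φ) →
      sSup ((fun Q => tpower n Q φ) '' {Q | MemRKD c Q ∧ μ Q ≠ m}) ≤
        sSup ((fun P => tpower n P φ) '' {P | MemRKD c P ∧ μ P = m})) ∧
    (∀ (φ : ℝ → (Fin n → ℝ × ℝ) → ℝ),
      (∀ m, Measurable (φ m) ∧ ∀ z, φ m z = 0 ∨ φ m z = 1) →
      (∀ m : ℝ, ∀ Q : ProbabilityMeasure (ℝ × ℝ), MemRKD c Q → μ Q ≠ m →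
        ASCont n Q (φ m)) →
      ∀ α : ℝ,
        sInf ((fun P => (sampleDist n P {z | φ (μ P) z = 0}).toReal)
          '' {P | MemRKD c P}) = 1 - α →
        0 < 1 - α →
        ∀ P : ProbabilityMeasure (ℝ × ℝ), MemRKD c P →
          0 < sampleDist n P {z | ¬ Bornology.IsBounded {m : ℝ | φ m z = 0}}) :=
  rkd_impossible_inference_general n c μ hμ
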